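/- arXiv:2503.09337 — 2 statements merged into one kernel-verified Lean document; each statement's English description precedes it below -/
import Mathlib

section
/- Let P : V → W be a linear map between finite-dimensional real vector spaces where V = R^{d} with decomposition indexed by a finite index set I, and fix S ⊆ I. Suppose the null space property relative to S holds: for every nonzero v ∈ ker P, ‖v_S‖₁ < ‖v_{S^c}‖₁ (where v_S denotes v restricted to coordinates in S, extended by zero). Then for every x supported on S, x is the unique minimizer of ‖z‖₁ subject to P z = P x. -/
/-! With `v = z - x ∈ ker P`, the triangle inequality on `S` gives
`‖z‖₁ ≥ ‖x‖₁ - ‖v_S‖₁ + ‖v_{Sᶜ}‖₁`, and the null space property says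
`‖v_S‖₁ < ‖v_{Sᶜ}‖₁` as soon as `z ≠ x`. -/

open Finset

theorem sum_abs_add_sum_compl_abs_sub_le {I : Type*} [Fintype I] [DecidableEq I]
    (S : Finset I) {x : I → ℝ} (hx : ∀ i ∉ S, x i = 0) (z : I → ℝ) :
    ∑ i, |x i| + ∑ i ∈ Sᶜ, |z i - x i| ≤ ∑ i, |z i| + ∑ i ∈ S, |z i - x i| := by
  have on_S : ∑ i ∈ S, |x i| ≤ ∑ i ∈ S, |z i| + ∑ i ∈ S, |z i - x i| := by
    rw [← sum_add_distrib]
    refine sum_le_sum fun i _ => ?_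
    simpa using abs_sub (z i) (z i - x i)
  have off_S : ∀ i ∈ Sᶜ, |x i| = 0 ∧ |z i - x i| = |z i| := fun i hi => by
    simp [hx i (mem_compl.mp hi)]
  rw [← sum_add_sum_compl S fun i => |x i|, ← sum_add_sum_compl S fun i => |z i|,
    sum_eq_zero fun i hi => (off_S i hi).1, sum_congr rfl fun i hi => (off_S i hi).2]
  linarith

theorem nsp_implies_unique_recovery
    {I : Type*} [Fintype I] [DecidableEq I]
    {W : Type*} [AddCommGroup W] [Module ℝ W]
    (P : (I → ℝ) →ₗ[ℝ] W) (S : Finset I)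
    (hNSP : ∀ v : I → ℝ, P v = 0 → v ≠ 0 →
      ∑ i ∈ S, |v i| < ∑ i ∈ Sᶜ, |v i|) :
    ∀ x : I → ℝ, (∀ i ∉ S, x i = 0) →
      ∀ z : I → ℝ, P z = P x → z ≠ x → ∑ i, |x i| < ∑ i, |z i| := by
  intro x hx z hPz hzx
  have hker : P (z - x) = 0 := by rw [map_sub, hPz, sub_self]
  have hnsp := hNSP (z - x) hker (sub_ne_zero.mpr hzx)
  have := sum_abs_add_sum_compl_abs_sub_le S hx z
  simp only [Pi.sub_apply] at hnsp
  linarith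
end

section
/- Let P : R^d → W be a linear map and S a subset of coordinate indices. Suppose every vector x supported on S is the unique minimizer of ‖z‖₁ subject to P z = P x. Then P satisfies the null space property relative to S: for every nonzero v ∈ ker P, ‖v_S‖₁ < ‖v_{S^c}‖₁. -/
/-!
Split a kernel vector as `v = x - z` with `x = v` on `S` (zero off `S`) and `z = -v` off `S`
(zero on `S`). Then `P z = P x`, and `z ≠ x` because `v ≠ 0`, so uniqueness of `x` as an
`ℓ¹` minimizer gives `‖x‖₁ < ‖z‖₁`, i.e. `‖v_S‖₁ < ‖v_{Sᶜ}‖₁`.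
-/

open Finset

theorem Finset.sum_abs_indicator {ι : Type*} [Fintype ι] (S : Finset ι) (v : ι → ℝ) :
    ∑ i, |(S : Set ι).indicator v i| = ∑ i ∈ S, |v i| := by
  calc ∑ i, |(S : Set ι).indicator v i|
      = ∑ i, (S : Set ι).indicator (fun j ↦ |v j|) i := by
        congr! 1 with i
        exact (congr_fun (Set.indicator_comp_of_zero (g := abs) abs_zero) i).symm
    _ = ∑ i ∈ S, |v i| := sum_indicator_subset _ (subset_univ S)

theorem unique_recovery_implies_nsp
    {d : ℕ} {W : Type*} [AddCommGroup W] [Module ℝ W]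
    (P : (Fin d → ℝ) →ₗ[ℝ] W) (S : Finset (Fin d))
    (hrec : ∀ x : Fin d → ℝ, (∀ i ∉ S, x i = 0) →
      ∀ z : Fin d → ℝ, P z = P x → z ≠ x → ∑ i, |x i| < ∑ i, |z i|) :
    ∀ v : Fin d → ℝ, P v = 0 → v ≠ 0 →
      ∑ i ∈ S, |v i| < ∑ i ∈ Sᶜ, |v i| := by
  intro v hv hv0
  set x := (S : Set (Fin d)).indicator v
  set z := -((Sᶜ : Finset (Fin d)) : Set (Fin d)).indicator v
  have hxz : x - z = v := by
    simp only [x, z, sub_neg_eq_add, coe_compl, Set.indicator_self_add_compl]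
  have hx_supp : ∀ i ∉ S, x i = 0 := fun i hi ↦ Set.indicator_of_notMem hi v
  have hPz : P z = P x := by
    rw [eq_comm, ← sub_eq_zero, ← map_sub, hxz, hv]
  have hzx : z ≠ x := fun h ↦ hv0 (by rw [← hxz, h, sub_self])
  have hlt := hrec x hx_supp z hPz hzx
  simpa only [x, z, Pi.neg_apply, abs_neg, sum_abs_indicator] using hlt
end
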